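/- Let (ψ₀,φ₀) ∈ [0,2π]×[0,2π] satisfy F₂(ψ₀,φ₀) = 2√2/(3π) and F₁(ψ₀,φ₀) ≥ 0. Then φ₀ ≤ 3π/2 and F₁(ψ₀,φ₀) = √((2−2cos φ₀)/φ₀² − 8/(9π²)) when φ₀ > 0 (respectively F₁(ψ₀,0) = √(1−8/(9π²)) when φ₀ = 0); equivalently, F(ψ₀,φ₀) = F̃(φ₀), where F̃(φ) = (√((2−2cos φ)/φ² − 8/(9π²)), 2√2/(3π), 2(φ−sin φ)/φ²) for φ ∈ (0,3π/2] and F̃(0) = (√(1−8/(9π²)), 2√2/(3π), 0). -/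

import Mathlib

open Real

/-- The parametrization `F` of the closed upper half of the boundary of the
sub-Riemannian unit ball, with `F(ψ,0) = (cos ψ, sin ψ, 0)`. -/
noncomputable def Fmap (p : ℝ × ℝ) : ℝ × ℝ × ℝ :=
  if p.2 = 0 then (Real.cos p.1, Real.sin p.1, 0)
  else (Real.sqrt (2 - 2*Real.cos p.2)/p.2 * Real.cos p.1,
        Real.sqrt (2 - 2*Real.cos p.2)/p.2 * Real.sin p.1,
        2*(p.2 - Real.sin p.2)/p.2^2)

/-- The curve `F̃` parametrizing the part with `x ≥ 0`, `z ≥ 0` of the slice of the upper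
half-sphere by the plane `{y = 2√2/(3π)}`. -/
noncomputable def Ftilde (φ : ℝ) : ℝ × ℝ × ℝ :=
  if φ = 0 then (Real.sqrt (1 - 8/(9*π^2)), 2*Real.sqrt 2/(3*π), 0)
  else (Real.sqrt ((2 - 2*Real.cos φ)/φ^2 - 8/(9*π^2)), 2*Real.sqrt 2/(3*π),
        2*(φ - Real.sin φ)/φ^2)

/-!
On the circle of radius `r` the point `(r cos ψ, r sin ψ)` with `r sin ψ = c` and `r cos ψ ≥ 0`
is `(√(r² - c²), c)`; here `r² = (2 - 2 cos φ)/φ²` (and `r = 1` at `φ = 0`). Such a point exists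
only if `c² ≤ r²`, and for `c = 2√2/(3π)` this fails on `(3π/2, 2π]`: there `cos φ > 0`, so
`(2 - 2 cos φ)/φ² < 2/(3π/2)² = c²`.
-/

lemma sq_two_mul_sqrt_two_div_three_mul_pi : (2 * √2 / (3 * π)) ^ 2 = 8 / (9 * π ^ 2) := by
  rw [div_pow, mul_pow, sq_sqrt zero_le_two]
  ring

lemma cos_pos_of_three_pi_div_two_lt {φ : ℝ} (hl : 3 * π / 2 < φ) (hu : φ ≤ 2 * π) :
    0 < cos φ := by
  rw [← cos_sub_two_pi]
  exact cos_pos_of_mem_Ioo ⟨by linarith, by linarith [pi_pos]⟩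

lemma two_sub_two_cos_div_sq_lt {φ : ℝ} (hl : 3 * π / 2 < φ) (hu : φ ≤ 2 * π) :
    (2 - 2 * cos φ) / φ ^ 2 < 8 / (9 * π ^ 2) := by
  have hπ := pi_pos
  have hcos := cos_pos_of_three_pi_div_two_lt hl hu
  have hφ : 9 * π ^ 2 / 4 < φ ^ 2 := by nlinarith
  rw [div_lt_div_iff₀ (by linarith [sq_nonneg π]) (by positivity)]
  nlinarith

lemma sq_sqrt_two_sub_two_cos_div (φ : ℝ) :
    (√(2 - 2 * cos φ) / φ) ^ 2 = (2 - 2 * cos φ) / φ ^ 2 := by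
  rw [div_pow, sq_sqrt (by linarith [cos_le_one φ])]

lemma sq_mul_sin_le_sq (r ψ : ℝ) : (r * sin ψ) ^ 2 ≤ r ^ 2 := by
  rw [mul_pow]
  exact mul_le_of_le_one_right (sq_nonneg r) (sin_sq_le_one ψ)

lemma mul_cos_eq_sqrt_of_mul_sin_eq {r ψ c : ℝ} (hx : 0 ≤ r * cos ψ) (hy : r * sin ψ = c) :
    r * cos ψ = √(r ^ 2 - c ^ 2) := by
  rw [← hy, ← sqrt_sq hx]
  congr 1
  linear_combination r ^ 2 * cos_sq_add_sin_sq ψ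

theorem Fmap_eq_Ftilde_general (ψ₀ φ₀ : ℝ)
    (hφ : φ₀ ∈ Set.Icc 0 (2*π))
    (h2 : (Fmap (ψ₀, φ₀)).2.1 = 2*Real.sqrt 2/(3*π))
    (h1 : 0 ≤ (Fmap (ψ₀, φ₀)).1) :
    φ₀ ≤ 3*π/2 ∧ Fmap (ψ₀, φ₀) = Ftilde φ₀ := by
  have hc := sq_two_mul_sqrt_two_div_three_mul_pi
  by_cases h0 : φ₀ = 0
  · subst h0
    simp only [Fmap, Ftilde, if_true] at h1 h2 ⊢
    refine ⟨by positivity, ?_⟩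
    have hcos := mul_cos_eq_sqrt_of_mul_sin_eq (r := 1) (by simpa using h1) (by simpa using h2)
    rw [one_mul, one_pow, hc] at hcos
    rw [hcos, h2]
  · simp only [Fmap, Ftilde, if_neg h0] at h1 h2 ⊢
    set r := √(2 - 2 * cos φ₀) / φ₀
    have hr := sq_sqrt_two_sub_two_cos_div φ₀
    have hle : φ₀ ≤ 3 * π / 2 := by
      by_contra! hlt
      have hsin := sq_mul_sin_le_sq r ψ₀
      rw [h2, hc, hr] at hsin
      exact (two_sub_two_cos_div_sq_lt hlt hφ.2).not_ge hsin
    refine ⟨hle, ?_⟩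
    rw [mul_cos_eq_sqrt_of_mul_sin_eq h1 h2, hr, hc, h2]

/-- If `(ψ₀,φ₀) ∈ [0,2π]×[0,2π]` satisfies `F₂(ψ₀,φ₀) = 2√2/(3π)` and `F₁(ψ₀,φ₀) ≥ 0`,
then `φ₀ ≤ 3π/2` and `F(ψ₀,φ₀) = F̃(φ₀)`. -/
theorem Fmap_eq_Ftilde (ψ₀ φ₀ : ℝ)
    (hψ : ψ₀ ∈ Set.Icc 0 (2*π)) (hφ : φ₀ ∈ Set.Icc 0 (2*π))
    (h2 : (Fmap (ψ₀, φ₀)).2.1 = 2*Real.sqrt 2/(3*π))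
    (h1 : 0 ≤ (Fmap (ψ₀, φ₀)).1) :
    φ₀ ≤ 3*π/2 ∧ Fmap (ψ₀, φ₀) = Ftilde φ₀ :=
  Fmap_eq_Ftilde_general ψ₀ φ₀ hφ h2 h1
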